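/- Let (y_t) in ℝ^n satisfy y_{t+1} = W(y_t + δ_t) with y_1 = 0, where W is a square matrix, and suppose there is a subspace condition e_j^T δ_t = 0 and (W̄ := W − 1 e_j^T) satisfies W̄ 1 = 0, e_j^T W̄ = 0, W^s = W̄^s + 1 e_j^T for s ≥ 1, ρ(W̄) < 1 in the sense that ‖W̄^{s} v‖ ≤ λ^{s}‖v‖ for some 0 < λ < 1 and all v with e_j^T v = 0, and ‖δ_t‖ ≤ (n+1)/t. Then ‖y_{t+1}‖ ≤ (1/(1−λ)) · (1/t) ∑_{s=1}^t (n+1)/s for all t ≥ 1, and consequently ‖y_t‖ = O((log t)/t). -/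

import Mathlib

/-!
Unrolling the recursion gives `y (t + 1) = ∑_{s ≤ t} W ^ (t + 1 - s) δ s`. As `δ s j = 0`, the
rank-one part `J = 1 e_jᵀ` of `W ^ m = (W - J) ^ m + J` annihilates `δ s`, so the `s`-th term has
norm at most `λ ^ (t + 1 - s) (n + 1) / s`. The weights `λ ^ (t + 1 - s)` increase with `s` while
`(n + 1) / s` decreases, so Chebyshev's sum inequality bounds the convolution by `t` times the
product of the two averages, and the geometric weights sum to at most `1 / (1 - λ)`. The
`O(log t / t)` bound then follows from `harmonic t ≤ 1 + log t`.
-/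

open Matrix Finset

theorem eq_sum_pow_apply_of_forall_succ_eq {R E : Type*} [Semiring R] [AddCommMonoid E]
    [Module R E] (A : Module.End R E) {y δ : ℕ → E} (hy1 : y 1 = 0)
    (hrec : ∀ t ≥ 1, y (t + 1) = A (y t + δ t)) (t : ℕ) :
    y (t + 1) = ∑ s ∈ Icc 1 t, (A ^ (t + 1 - s)) (δ s) := by
  induction t with
  | zero => simpa using hy1
  | succ t ih =>
    rw [hrec (t + 1) (by omega), ih, sum_Icc_succ_top (by omega), map_add, map_sum,
      Nat.add_sub_cancel_left, pow_one]
    congr 1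
    refine sum_congr rfl fun s hs => ?_
    rw [show t + 1 + 1 - s = (t + 1 - s) + 1 by rw [mem_Icc] at hs; omega, pow_succ',
      Module.End.mul_apply]

theorem Matrix.toEuclideanLin_pow {𝕜 ι : Type*} [RCLike 𝕜] [Fintype ι] [DecidableEq ι]
    (A : Matrix ι ι 𝕜) (k : ℕ) : toEuclideanLin (A ^ k) = toEuclideanLin A ^ k := by
  rw [← coe_toEuclideanCLM_eq_toEuclideanLin, map_pow, ContinuousLinearMap.toLinearMap_pow]
  rfl

theorem Matrix.toEuclideanLin_of_ite_apply_of_apply_eq_zero {𝕜 ι : Type*} [RCLike 𝕜] [Fintype ι]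
    [DecidableEq ι] {j : ι} {v : EuclideanSpace 𝕜 ι} (hv : v j = 0) :
    toEuclideanLin (of fun (_ : ι) k => if k = j then (1 : 𝕜) else 0) v = 0 := by
  ext i
  simp [mulVec, dotProduct, hv]

theorem sum_Icc_pow_sub_le_one_div {lam : ℝ} (h0 : 0 ≤ lam) (h1 : lam < 1) (t : ℕ) :
    ∑ s ∈ Icc 1 t, lam ^ (t + 1 - s) ≤ 1 / (1 - lam) := by
  have hrefl : ∑ s ∈ Icc 1 t, lam ^ (t + 1 - s) = ∑ k ∈ Ico 1 (t + 1), lam ^ k := by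
    refine sum_nbij' (fun s => t + 1 - s) (fun k => t + 1 - k) ?_ ?_ ?_ ?_ ?_ <;>
      intro a ha <;> simp only [mem_Icc, mem_Ico] at * <;> omega
  calc _ = ∑ k ∈ Ico 1 (t + 1), lam ^ k := hrefl
    _ ≤ lam ^ 1 / (1 - lam) := geom_sum_Ico_le_of_lt_one h0 h1
    _ ≤ 1 / (1 - lam) := by rw [pow_one]; gcongr

theorem sum_Icc_pow_sub_mul_le_of_antitoneOn {lam : ℝ} (h0 : 0 ≤ lam) (h1 : lam < 1) {t : ℕ}
    {a : ℕ → ℝ} (ha : AntitoneOn a (Icc 1 t)) (ha0 : ∀ s ∈ Icc 1 t, 0 ≤ a s) :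
    ∑ s ∈ Icc 1 t, lam ^ (t + 1 - s) * a s ≤ 1 / (1 - lam) * (1 / t * ∑ s ∈ Icc 1 t, a s) := by
  rcases Nat.eq_zero_or_pos t with rfl | ht
  · simp
  have hmono : MonotoneOn (fun s => lam ^ (t + 1 - s)) (Icc 1 t) := fun a _ b hb hab =>
    pow_le_pow_of_le_one h0 h1.le (by rw [coe_Icc, Set.mem_Icc] at hb; omega)
  have hcheb := (hmono.antivaryOn ha).card_mul_sum_le_sum_mul_sum
  rw [Nat.card_Icc, Nat.add_sub_cancel] at hcheb
  rw [show ∀ c d : ℝ, c * (1 / t * d) = c * d / t by intros; ring, le_div_iff₀ (by positivity),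
    mul_comm]
  exact hcheb.trans
    (mul_le_mul_of_nonneg_right (sum_Icc_pow_sub_le_one_div h0 h1 t) (sum_nonneg ha0))

theorem one_add_log_div_le {x : ℝ} (hx : 1 ≤ x) :
    (1 + Real.log x) / x ≤ 2 * (1 + 1 / Real.log 2) * Real.log (x + 1) / (x + 1) := by
  have hlog2 : 0 < Real.log 2 := Real.log_pos (by norm_num)
  have hlog : Real.log 2 ≤ Real.log (x + 1) := Real.log_le_log (by norm_num) (by linarith)
  have hnum : 1 + Real.log x ≤ (1 + 1 / Real.log 2) * Real.log (x + 1) := by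
    have : Real.log x ≤ Real.log (x + 1) := Real.log_le_log (by linarith) (by linarith)
    have : 1 ≤ Real.log (x + 1) / Real.log 2 := by rw [le_div_iff₀ hlog2]; linarith
    rw [add_mul, one_mul, one_div_mul_eq_div]
    linarith
  have hden : 1 / x ≤ 2 / (x + 1) := by
    rw [div_le_div_iff₀ (by linarith) (by linarith)]; linarith
  calc (1 + Real.log x) / x = 1 / x * (1 + Real.log x) := by ring
    _ ≤ 2 / (x + 1) * ((1 + 1 / Real.log 2) * Real.log (x + 1)) := by
        gcongr
        linarith [Real.log_nonneg hx]
    _ = 2 * (1 + 1 / Real.log 2) * Real.log (x + 1) / (x + 1) := by ring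

theorem stmt_6_general (n : ℕ) (W : Matrix (Fin n) (Fin n) ℝ) (j : Fin n)
    (J : Matrix (Fin n) (Fin n) ℝ)
    (hJ : J = Matrix.of fun _ k => if k = j then (1 : ℝ) else 0)
    (y δ : ℕ → EuclideanSpace ℝ (Fin n))
    (hy1 : y 1 = 0)
    (hrec : ∀ t ≥ 1, y (t + 1) = Matrix.toEuclideanLin W (y t + δ t))
    (hδj : ∀ t ≥ 1, δ t j = 0)
    (hWs : ∀ s : ℕ, 1 ≤ s → W ^ s = (W - J) ^ s + J)
    (lam : ℝ) (hlam0 : 0 < lam) (hlam1 : lam < 1)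
    (hdecay : ∀ (s : ℕ) (v : EuclideanSpace ℝ (Fin n)), v j = 0 →
      ‖Matrix.toEuclideanLin ((W - J) ^ s) v‖ ≤ lam ^ s * ‖v‖)
    (hδ : ∀ t ≥ 1, ‖δ t‖ ≤ ((n : ℝ) + 1) / t) :
    (∀ t : ℕ, 1 ≤ t →
      ‖y (t + 1)‖ ≤ (1 / (1 - lam)) * ((1 / (t : ℝ)) * ∑ s ∈ Finset.Icc 1 t, ((n : ℝ) + 1) / s)) ∧
    (∃ C : ℝ, ∀ t : ℕ, 2 ≤ t → ‖y t‖ ≤ C * Real.log t / t) := by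
  have hterm : ∀ s ≥ 1, ∀ m ≥ 1, ‖toEuclideanLin (W ^ m) (δ s)‖ ≤ lam ^ m * ((n + 1) / s) := by
    intro s hs m hm
    have hJδ : toEuclideanLin J (δ s) = 0 :=
      hJ ▸ toEuclideanLin_of_ite_apply_of_apply_eq_zero (hδj s hs)
    rw [hWs m hm, map_add, LinearMap.add_apply, hJδ, add_zero]
    exact (hdecay m (δ s) (hδj s hs)).trans (by gcongr; exact hδ s hs)
  have hbound : ∀ t : ℕ,
      ‖y (t + 1)‖ ≤ 1 / (1 - lam) * (1 / (t : ℝ) * ∑ s ∈ Icc 1 t, ((n : ℝ) + 1) / s) := by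
    intro t
    calc ‖y (t + 1)‖ = ‖∑ s ∈ Icc 1 t, toEuclideanLin (W ^ (t + 1 - s)) (δ s)‖ := by
          simp_rw [toEuclideanLin_pow, eq_sum_pow_apply_of_forall_succ_eq _ hy1 hrec]
      _ ≤ ∑ s ∈ Icc 1 t, lam ^ (t + 1 - s) * (((n : ℝ) + 1) / s) :=
          norm_sum_le_of_le _ fun s hs => hterm s (mem_Icc.1 hs).1 _ (by rw [mem_Icc] at hs; omega)
      _ ≤ _ := by
          refine sum_Icc_pow_sub_mul_le_of_antitoneOn hlam0.le hlam1
            (fun a ha b _ hab => ?_) (fun s _ => by positivity)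
          have : (0 : ℝ) < a := by rw [coe_Icc, Set.mem_Icc] at ha; exact_mod_cast ha.1
          gcongr
  refine ⟨fun t _ => hbound t,
    1 / (1 - lam) * (n + 1) * (2 * (1 + 1 / Real.log 2)), fun t ht => ?_⟩
  obtain ⟨m, rfl⟩ : ∃ m, t = m + 1 := ⟨t - 1, by omega⟩
  have hm : (1 : ℝ) ≤ m := by exact_mod_cast (by omega : 1 ≤ m)
  have hlam : 0 < 1 - lam := by linarith
  have hharm : ∑ s ∈ Icc 1 m, ((n : ℝ) + 1) / s = (n + 1) * harmonic m := by
    simp [harmonic_eq_sum_Icc, mul_sum, div_eq_mul_inv]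
  calc ‖y (m + 1)‖ ≤ 1 / (1 - lam) * ((n + 1) * (harmonic m / m)) := by
        convert hbound m using 2; rw [hharm]; ring
    _ ≤ 1 / (1 - lam) * ((n + 1) * ((1 + Real.log m) / m)) := by
        gcongr
        exact harmonic_le_one_add_log m
    _ ≤ 1 / (1 - lam) * ((n + 1) * (2 * (1 + 1 / Real.log 2) * Real.log (m + 1) / (m + 1))) := by
        gcongr _ * (_ * ?_)
        exact one_add_log_div_le hm
    _ = _ := by push_cast; ring

/-- For the recursion `y_{t+1} = W(y_t + δ_t)`, `y_1 = 0`, with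
`e_j^T δ_t = 0`, `W̄ = W − 1 e_j^T` satisfying `W̄1 = 0`, `e_j^T W̄ = 0`,
`W^s = W̄^s + 1 e_j^T`, geometric decay `‖W̄^s v‖ ≤ λ^s ‖v‖` on `{v : e_j^T v = 0}`
with `0 < λ < 1`, and `‖δ_t‖ ≤ (n+1)/t`, we get
`‖y_{t+1}‖ ≤ (1/(1−λ)) (1/t) ∑_{s=1}^t (n+1)/s`, hence `‖y_t‖ = O((log t)/t)`. -/
theorem stmt_6 (n : ℕ) (W : Matrix (Fin n) (Fin n) ℝ) (j : Fin n)
    (J : Matrix (Fin n) (Fin n) ℝ)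
    (hJ : J = Matrix.of fun _ k => if k = j then (1 : ℝ) else 0)
    (y δ : ℕ → EuclideanSpace ℝ (Fin n))
    (hy1 : y 1 = 0)
    (hrec : ∀ t ≥ 1, y (t + 1) = Matrix.toEuclideanLin W (y t + δ t))
    (hδj : ∀ t ≥ 1, δ t j = 0)
    (hW1 : (W - J) *ᵥ (fun _ => (1 : ℝ)) = 0)
    (hejW : (fun k => if k = j then (1 : ℝ) else 0) ᵥ* (W - J) = 0)
    (hWs : ∀ s : ℕ, 1 ≤ s → W ^ s = (W - J) ^ s + J)
    (lam : ℝ) (hlam0 : 0 < lam) (hlam1 : lam < 1)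
    (hdecay : ∀ (s : ℕ) (v : EuclideanSpace ℝ (Fin n)), v j = 0 →
      ‖Matrix.toEuclideanLin ((W - J) ^ s) v‖ ≤ lam ^ s * ‖v‖)
    (hδ : ∀ t ≥ 1, ‖δ t‖ ≤ ((n : ℝ) + 1) / t) :
    (∀ t : ℕ, 1 ≤ t →
      ‖y (t + 1)‖ ≤ (1 / (1 - lam)) * ((1 / (t : ℝ)) * ∑ s ∈ Finset.Icc 1 t, ((n : ℝ) + 1) / s)) ∧
    (∃ C : ℝ, ∀ t : ℕ, 2 ≤ t → ‖y t‖ ≤ C * Real.log t / t) :=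
  stmt_6_general n W j J hJ y δ hy1 hrec hδj hWs lam hlam0 hlam1 hdecay hδ
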